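/- Let (u·e_i, f) and (v·e_j, g) be admissible labelled polynomials with f, g nonzero, let t_f = LM(f), t_g = LM(g), and set σ_f = LCM(t_f,t_g)/t_f and σ_g = LCM(t_f,t_g)/t_g. If σ_f·(u·e_i) > σ_g·(v·e_j) in the signature ordering, then the S-polynomial S = σ_f·(f/LC(f)) − σ_g·(g/LC(g)) together with the signature σ_f·u·e_i forms an admissible labelled polynomial. -/

import Mathlib

open MvPolynomial
open scoped MonomialOrder

/-- The leading monomial (exponent vector) of a polynomial w.r.t. a monomial order. -/
noncomputable def lmon {σ F : Type*} [Field F] (m : MonomialOrder σ)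
    (f : MvPolynomial σ F) : σ →₀ ℕ :=
  m.toSyn.symm (f.support.sup fun d => m.toSyn d)

/-- `(t·e_i, p)` is an admissible labelled polynomial w.r.t. `f_0,…,f_{M-1}`. -/
def Admissible {σ F : Type*} [Field F] (m : MonomialOrder σ) {M : ℕ}
    (Fs : Fin M → MvPolynomial σ F) (t : σ →₀ ℕ) (i : Fin M)
    (p : MvPolynomial σ F) : Prop :=
  ∃ h : Fin M → MvPolynomial σ F,
    p = ∑ k, h k * Fs k ∧ (∀ k, i < k → h k = 0) ∧ h i ≠ 0 ∧ lmon m (h i) = t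

/-- The strict ordering on signatures: by index first, then by the monomial order. -/
def SigLt {σ : Type*} (m : MonomialOrder σ) {M : ℕ}
    (a b : (σ →₀ ℕ) × Fin M) : Prop :=
  a.2 < b.2 ∨ (a.2 = b.2 ∧ m.toSyn a.1 < m.toSyn b.1)

section Aux

variable {σ F : Type*} [Field F] (m : MonomialOrder σ)

lemma lmon_mem_support {f : MvPolynomial σ F} (hf : f ≠ 0) :
    lmon m f ∈ f.support := by
  obtain ⟨d, hd, hd'⟩ :=
    Finset.exists_mem_eq_sup f.support (support_nonempty.mpr hf) (fun d => m.toSyn d)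
  rw [lmon, hd']
  simpa using hd

lemma toSyn_le_lmon {f : MvPolynomial σ F} {d : σ →₀ ℕ} (hd : d ∈ f.support) :
    m.toSyn d ≤ m.toSyn (lmon m f) := by
  rw [lmon, AddEquiv.apply_symm_apply]
  exact Finset.le_sup hd

lemma lmon_eq_of {f : MvPolynomial σ F} {d : σ →₀ ℕ} (h1 : d ∈ f.support)
    (h2 : ∀ e ∈ f.support, m.toSyn e ≤ m.toSyn d) :
    lmon m f = d := by
  have : f.support.sup (fun e => m.toSyn e) = m.toSyn d :=
    le_antisymm (Finset.sup_le h2) (Finset.le_sup h1)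
  rw [lmon, this, AddEquiv.symm_apply_apply]

lemma lmon_monomial_mul {d : σ →₀ ℕ} {c : F} {f : MvPolynomial σ F}
    (hc : c ≠ 0) (hf : f ≠ 0) :
    lmon m (monomial d c * f) = d + lmon m f := by
  classical
  apply lmon_eq_of
  · rw [mem_support_iff, coeff_monomial_mul]
    exact mul_ne_zero hc (by simpa [mem_support_iff] using lmon_mem_support m hf)
  · intro e he
    have := support_mul (monomial d c) f he
    rw [Finset.mem_add] at this
    obtain ⟨a, ha, b, hb, rfl⟩ := this
    have ha' : a = d := by
      have := support_monomial_subset ha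
      simpa using this
    subst ha'
    rw [map_add, map_add]
    exact add_le_add le_rfl (toSyn_le_lmon m hb)

lemma lmon_sub_eq {a b : MvPolynomial σ F} (ha : a ≠ 0)
    (hb : ∀ e ∈ b.support, m.toSyn e < m.toSyn (lmon m a)) :
    a - b ≠ 0 ∧ lmon m (a - b) = lmon m a := by
  have hba : b.coeff (lmon m a) = 0 := by
    by_contra h
    exact lt_irrefl _ (hb _ (mem_support_iff.mpr h))
  have hco : (a - b).coeff (lmon m a) = a.coeff (lmon m a) := by
    rw [coeff_sub, hba, sub_zero]
  have hane : a.coeff (lmon m a) ≠ 0 := by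
    simpa [mem_support_iff] using lmon_mem_support m ha
  have hne : a - b ≠ 0 := fun h => hane (by rw [← hco, h, coeff_zero])
  refine ⟨hne, lmon_eq_of m (mem_support_iff.mpr (hco ▸ hane)) ?_⟩
  intro e he
  rw [mem_support_iff, coeff_sub] at he
  by_cases hea : e ∈ a.support
  · exact toSyn_le_lmon m hea
  · rw [notMem_support_iff] at hea
    have : e ∈ b.support := by
      rw [mem_support_iff]
      intro h
      rw [hea, h, sub_zero] at he
      exact he rfl
    exact (hb e this).le

end Aux

theorem stmt5 {σ F : Type*} [Field F] (m : MonomialOrder σ) {M : ℕ}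
    (Fs : Fin M → MvPolynomial σ F) (u v : σ →₀ ℕ) (i j : Fin M)
    (f g : MvPolynomial σ F)
    (hf : Admissible m Fs u i f) (hg : Admissible m Fs v j g)
    (hf0 : f ≠ 0) (hg0 : g ≠ 0)
    (hsig : SigLt m (lmon m f ⊔ lmon m g - lmon m g + v, j)
                    (lmon m f ⊔ lmon m g - lmon m f + u, i)) :
    Admissible m Fs (lmon m f ⊔ lmon m g - lmon m f + u) i
      (monomial (lmon m f ⊔ lmon m g - lmon m f) (f.coeff (lmon m f))⁻¹ * f -
       monomial (lmon m f ⊔ lmon m g - lmon m g) (g.coeff (lmon m g))⁻¹ * g) := by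
  obtain ⟨h, hsum, hgt, hi0, hlm⟩ := hf
  obtain ⟨h', hsum', hgt', hj0, hlm'⟩ := hg
  set sf := lmon m f ⊔ lmon m g - lmon m f with hsf
  set sg := lmon m f ⊔ lmon m g - lmon m g with hsg
  have hcf : (f.coeff (lmon m f))⁻¹ ≠ 0 :=
    inv_ne_zero (by simpa [mem_support_iff] using lmon_mem_support m hf0)
  have hcg : (g.coeff (lmon m g))⁻¹ ≠ 0 :=
    inv_ne_zero (by simpa [mem_support_iff] using lmon_mem_support m hg0)
  have hji : j ≤ i := by
    rcases hsig with h1 | h1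
    · exact le_of_lt h1
    · exact le_of_eq h1.1
  refine ⟨fun k => monomial sf (f.coeff (lmon m f))⁻¹ * h k -
      monomial sg (g.coeff (lmon m g))⁻¹ * h' k, ?_, ?_, ?_, ?_⟩
  · rw [hsum, hsum', Finset.mul_sum, Finset.mul_sum, ← Finset.sum_sub_distrib]
    exact Finset.sum_congr rfl fun k _ => by ring
  · intro k hk
    simp only [hgt k hk, hgt' k (lt_of_le_of_lt hji hk), mul_zero, sub_zero]
  all_goals {
    have hA0 : monomial sf (f.coeff (lmon m f))⁻¹ * h i ≠ 0 :=
      mul_ne_zero (by simp [monomial_eq_zero, hcf]) hi0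
    have hAlm : lmon m (monomial sf (f.coeff (lmon m f))⁻¹ * h i) = sf + u := by
      rw [lmon_monomial_mul m hcf hi0, hlm]
    have key : ∀ e ∈ (monomial sg (g.coeff (lmon m g))⁻¹ * h' i).support,
        m.toSyn e < m.toSyn (lmon m (monomial sf (f.coeff (lmon m f))⁻¹ * h i)) := by
      rcases lt_or_eq_of_le hji with hji' | hji'
      · intro e he
        rw [hgt' i hji', mul_zero] at he
        simp at he
      · subst hji'
        rcases hsig with h1 | h1
        · exact absurd h1 (lt_irrefl j)
        · intro e he
          have : lmon m (monomial sg (g.coeff (lmon m g))⁻¹ * h' j) = sg + v := by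
            rw [lmon_monomial_mul m hcg hj0, hlm']
          calc m.toSyn e ≤ m.toSyn (sg + v) := this ▸ toSyn_le_lmon m he
            _ < m.toSyn (sf + u) := h1.2
            _ = _ := by rw [hAlm]
    obtain ⟨hne, hlmeq⟩ := lmon_sub_eq m hA0 key
    first
      | exact hne
      | (rw [hlmeq, hAlm])
  }
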